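/- Peeling lemma for good multi-hypergraphs (Lemma 6.4): Fix integers r ≥ 2 and m ≥ 2. Let α be a nonzero good r-uniform multi-hypergraph, fix an edge e of α (with multiplicity), and let α⋆(e) be the maximal good subgraph of α − 1_e, i.e. the union (edgewise maximum) of all good subgraphs of α − 1_e. If α⋆(e) ≠ 0, then r|α⋆(e)| − 2|V(α⋆(e))| + m ≤ r|α| − 2|V(α)| + m − 1. -/

import Mathlib

open MeasureTheory

/-- An r-uniform multi-hypergraph on [n]: a multiplicity for each size-r multiset
of vertices. -/
abbrev MHG (n r : ℕ) := Sym (Fin n) r → ℕ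

/-- The multiset of edges (each a multiset of vertices) of a multi-hypergraph,
with multiplicity. -/
def edgesOf {n r : ℕ} (α : MHG n r) : Multiset (Multiset (Fin n)) :=
  ∑ e : Sym (Fin n) r, Multiset.replicate (α e) (e : Multiset (Fin n))

/-- The extra hyperedge {1,…,m} (vertices of index < m). -/
def barEdge (n m : ℕ) : Multiset (Fin n) :=
  (Finset.univ.filter fun i : Fin n => (i : ℕ) < m).val

/-- ᾱ: the multi-hypergraph α together with the added hyperedge {1,…,m}. -/
def barGraph {n r : ℕ} (m : ℕ) (α : MHG n r) : Multiset (Multiset (Fin n)) :=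
  barEdge n m ::ₘ edgesOf α

/-- Degree of vertex i in a multiset of edges, counted with multiplicity
(an edge contributes the number of occurrences of i in it). -/
def degM {n : ℕ} (G : Multiset (Multiset (Fin n))) (i : Fin n) : ℕ :=
  (G.map fun e => e.count i).sum

/-- A (general, not necessarily uniform) multi-hypergraph given as a multiset of
edges is connected: every pair of non-isolated vertices is joined by a chain of
pairwise-intersecting edges of G. -/
def MHConnected {n : ℕ} (G : Multiset (Multiset (Fin n))) : Prop :=
  ∀ u v : Fin n, (∃ e ∈ G, u ∈ e) → (∃ e ∈ G, v ∈ e) →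
    ∃ (p : ℕ) (c : Fin (p + 1) → Multiset (Fin n)),
      (∀ j, c j ∈ G) ∧ u ∈ c 0 ∧ v ∈ c (Fin.last p) ∧
      ∀ j : Fin p, ∃ w : Fin n, w ∈ c j.castSucc ∧ w ∈ c j.succ

/-- α is good: α = 0, or ᾱ is connected and every non-isolated vertex of ᾱ has
degree at least 2 (with multiplicity). -/
def GoodMHG {n r : ℕ} (m : ℕ) (α : MHG n r) : Prop :=
  α = 0 ∨ (MHConnected (barGraph m α) ∧
    ∀ i : Fin n, 0 < degM (barGraph m α) i → 2 ≤ degM (barGraph m α) i)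

/-- Number of edges of α, counted with multiplicity. -/
def edgeCount {n r : ℕ} (α : MHG n r) : ℕ := ∑ e, α e

/-- Number of non-isolated vertices of α. -/
def vertexCount {n r : ℕ} (α : MHG n r) : ℕ :=
  (Finset.univ.filter fun i : Fin n => 0 < degM (edgesOf α) i).card

/-- binom(α,β) = ∏_e binom(α_e, β_e). -/
def mhgChoose {n r : ℕ} (α β : MHG n r) : ℕ := ∏ e, Nat.choose (α e) (β e)

/-- X^α = ∏_e X_e^{α_e} as a function of θ, where X_e = λ·∏_{i∈e} θ_i
(with multiplicity). -/
noncomputable def XPow {n r : ℕ} (lam : ℝ) (θ : Fin n → ℝ) (α : MHG n r) : ℝ :=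
  ∏ e : Sym (Fin n) r, (lam * ((e : Multiset (Fin n)).map θ).prod) ^ α e

/-- The estimand x = ∏_{i=1}^m θ_i. -/
def xEst {n : ℕ} (m : ℕ) (hmn : m ≤ n) (θ : Fin n → ℝ) : ℝ :=
  ∏ i : Fin m, θ (Fin.castLE hmn i)

open scoped Classical

/-- The maximal good subgraph of α: the edgewise maximum (union) of all good
subgraphs β ≤ α. -/
noncomputable def maxGoodSub {n r : ℕ} (m : ℕ) (α : MHG n r) : MHG n r :=
  fun f => ((Finset.Iic α).filter fun β => GoodMHG m β).sup fun β => β f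

/-!
Write σ = α⋆(e). When m ≥ 1 every nonzero good graph covers the bar edge {1,…,m}, so a union of
good subgraphs is again connected after adding the bar edge, hence good; thus σ is good and σ < α.
Compare the degree sums Σᵢ deg = r·|·| of α and σ. A vertex of V(α) \ V(σ) lies outside
{1,…,m}, so it has degree ≥ 2 in α and 0 in σ. Moreover, connectivity of ᾱ forces some removed
edge to meet V(σ), which costs at least one more unit of degree. Hence
r|α| − r|σ| ≥ 2(|V(α)| − |V(σ)|) + 1.
-/

section Degrees

variable {n r : ℕ}

lemma mem_edgesOf {α : MHG n r} {E : Multiset (Fin n)} :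
    E ∈ edgesOf α ↔ ∃ f : Sym (Fin n) r, 0 < α f ∧ (f : Multiset (Fin n)) = E := by
  simp [edgesOf, Multiset.mem_sum, Multiset.mem_replicate, Nat.pos_iff_ne_zero, eq_comm]

lemma mem_barEdge {m : ℕ} {i : Fin n} : i ∈ barEdge n m ↔ (i : ℕ) < m := by
  simp [barEdge]

lemma mem_barGraph {m : ℕ} {α : MHG n r} {E : Multiset (Fin n)} :
    E ∈ barGraph m α ↔
      E = barEdge n m ∨ ∃ f : Sym (Fin n) r, 0 < α f ∧ (f : Multiset (Fin n)) = E := by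
  rw [barGraph, Multiset.mem_cons, mem_edgesOf]

lemma edgesOf_mono {α β : MHG n r} (h : α ≤ β) : edgesOf α ≤ edgesOf β :=
  Finset.sum_le_sum fun f _ => Multiset.replicate_mono _ (h f)

lemma barGraph_mono (m : ℕ) {α β : MHG n r} (h : α ≤ β) : barGraph m α ≤ barGraph m β :=
  Multiset.cons_le_cons _ (edgesOf_mono h)

lemma degM_edgesOf (α : MHG n r) (i : Fin n) :
    degM (edgesOf α) i = ∑ f, α f * (f : Multiset (Fin n)).count i := by
  change (Multiset.sumAddMonoidHom.comp (Multiset.mapAddMonoidHom (Multiset.count i)))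
    (∑ f, _) = _
  simp [map_sum]

lemma degM_barGraph (m : ℕ) (α : MHG n r) (i : Fin n) :
    degM (barGraph m α) i = (if (i : ℕ) < m then 1 else 0) + degM (edgesOf α) i := by
  rw [barGraph, degM, Multiset.map_cons, Multiset.sum_cons, ← degM, barEdge,
    Multiset.count_eq_of_nodup (Finset.nodup _)]
  simp

lemma degM_edgesOf_pos_iff {α : MHG n r} {i : Fin n} :
    0 < degM (edgesOf α) i ↔ ∃ f : Sym (Fin n) r, 0 < α f ∧ i ∈ (f : Multiset (Fin n)) := by
  simp [degM_edgesOf, Finset.sum_pos_iff, Nat.pos_iff_ne_zero]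

lemma degM_edgesOf_mono {α β : MHG n r} (h : α ≤ β) (i : Fin n) :
    degM (edgesOf α) i ≤ degM (edgesOf β) i := by
  simp only [degM_edgesOf]
  gcongr with f
  exact h f

lemma degM_edgesOf_lt_of_lt {α β : MHG n r} (h : α ≤ β) {f : Sym (Fin n) r} (hf : α f < β f)
    {i : Fin n} (hi : i ∈ (f : Multiset (Fin n))) :
    degM (edgesOf α) i < degM (edgesOf β) i := by
  simp only [degM_edgesOf]
  refine Finset.sum_lt_sum (fun g _ => Nat.mul_le_mul_right _ (h g)) ⟨f, Finset.mem_univ f, ?_⟩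
  exact Nat.mul_lt_mul_of_pos_right hf (Multiset.count_pos.mpr hi)

lemma sum_degM_edgesOf (α : MHG n r) : ∑ i, degM (edgesOf α) i = r * edgeCount α := by
  simp only [degM_edgesOf, edgeCount]
  rw [Finset.sum_comm, Finset.mul_sum]
  refine Finset.sum_congr rfl fun f _ => ?_
  rw [← Finset.mul_sum, Multiset.sum_count_eq_card fun _ _ => Finset.mem_univ _, Sym.card_coe,
    mul_comm]

end Degrees

section Connectivity

variable {n : ℕ}

def EdgeAdj (G : Multiset (Multiset (Fin n))) (u v : Fin n) : Prop :=
  ∃ E ∈ G, u ∈ E ∧ v ∈ E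

instance (G : Multiset (Multiset (Fin n))) : Std.Symm (EdgeAdj G) :=
  ⟨fun _ _ ⟨E, hE, hu, hv⟩ => ⟨E, hE, hv, hu⟩⟩

lemma EdgeAdj.mono {G H : Multiset (Multiset (Fin n))} (h : G ≤ H) {u v : Fin n}
    (huv : EdgeAdj G u v) : EdgeAdj H u v :=
  let ⟨E, hE, hu, hv⟩ := huv
  ⟨E, Multiset.mem_of_le h hE, hu, hv⟩

lemma reflTransGen_edgeAdj_of_chain {G : Multiset (Multiset (Fin n))} {u v : Fin n} (p : ℕ)
    (c : Fin (p + 1) → Multiset (Fin n)) (hc : ∀ j, c j ∈ G) (hu : u ∈ c 0)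
    (hv : v ∈ c (Fin.last p)) (hlink : ∀ j : Fin p, ∃ w, w ∈ c j.castSucc ∧ w ∈ c j.succ) :
    Relation.ReflTransGen (EdgeAdj G) u v := by
  induction p generalizing u with
  | zero => exact .single ⟨c 0, hc 0, hu, hv⟩
  | succ p ih =>
    obtain ⟨w, hw₀, hw₁⟩ := hlink 0
    refine .head ⟨c 0, hc 0, hu, hw₀⟩ (ih (fun j => c j.succ) (fun j => hc j.succ) hw₁ ?_ ?_)
    · simpa [Fin.succ_last] using hv
    · intro j
      obtain ⟨w, hw₀, hw₁⟩ := hlink j.succ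
      exact ⟨w, by simpa only [Fin.succ_castSucc] using hw₀, hw₁⟩

lemma exists_chain_of_reflTransGen_edgeAdj {G : Multiset (Multiset (Fin n))} {u v : Fin n}
    (h : Relation.ReflTransGen (EdgeAdj G) u v) (hu : ∃ E ∈ G, u ∈ E) :
    ∃ (p : ℕ) (c : Fin (p + 1) → Multiset (Fin n)),
      (∀ j, c j ∈ G) ∧ u ∈ c 0 ∧ v ∈ c (Fin.last p) ∧
      ∀ j : Fin p, ∃ w : Fin n, w ∈ c j.castSucc ∧ w ∈ c j.succ := by
  induction h with
  | refl =>
    obtain ⟨E, hE, huE⟩ := hu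
    exact ⟨0, fun _ => E, fun _ => hE, huE, huE, fun j => j.elim0⟩
  | @tail b w _ hbw ih =>
    obtain ⟨E, hE, hbE, hwE⟩ := hbw
    obtain ⟨p, c, hc, hu0, hb, hlink⟩ := ih
    refine ⟨p + 1, Fin.snoc c E, Fin.lastCases (by simpa using hE) (by simpa using hc),
      by simpa using hu0, by simpa using hwE, Fin.lastCases ⟨b, by simpa using hb, by simpa⟩ ?_⟩
    intro j
    obtain ⟨w, hw₀, hw₁⟩ := hlink j
    exact ⟨w, by rwa [Fin.snoc_castSucc], by rwa [Fin.succ_castSucc, Fin.snoc_castSucc]⟩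

lemma mhConnected_iff {G : Multiset (Multiset (Fin n))} :
    MHConnected G ↔ ∀ u v : Fin n, (∃ E ∈ G, u ∈ E) → (∃ E ∈ G, v ∈ E) →
      Relation.ReflTransGen (EdgeAdj G) u v := by
  refine ⟨fun h u v hu hv => ?_, fun h u v hu hv =>
    exists_chain_of_reflTransGen_edgeAdj (h u v hu hv) hu⟩
  obtain ⟨p, c, hc, hu0, hv, hlink⟩ := h u v hu hv
  exact reflTransGen_edgeAdj_of_chain p c hc hu0 hv hlink

end Connectivity

namespace GoodMHG

variable {n r m : ℕ} {α : MHG n r}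

lemma mhConnected (hα : GoodMHG m α) (hne : α ≠ 0) : MHConnected (barGraph m α) :=
  (hα.resolve_left hne).1

lemma degM_edgesOf_pos_of_lt (hα : GoodMHG m α) (hne : α ≠ 0) {i : Fin n} (hi : (i : ℕ) < m) :
    0 < degM (edgesOf α) i := by
  have h := (hα.resolve_left hne).2 i
  simp only [degM_barGraph, if_pos hi] at h
  omega

lemma two_le_degM_edgesOf (hα : GoodMHG m α) {i : Fin n} (hi : ¬ (i : ℕ) < m)
    (hpos : 0 < degM (edgesOf α) i) : 2 ≤ degM (edgesOf α) i := by
  rcases hα with rfl | ⟨-, hdeg⟩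
  · simp [degM_edgesOf] at hpos
  · simpa [degM_barGraph, if_neg hi, hpos] using hdeg i

end GoodMHG

section MaxGoodSub

variable {n r m : ℕ} {β γ : MHG n r}

lemma maxGoodSub_le (γ : MHG n r) : maxGoodSub m γ ≤ γ := fun f =>
  Finset.sup_le fun _ hβ => (Finset.mem_Iic.mp (Finset.mem_filter.mp hβ).1) f

lemma le_maxGoodSub (hβ : GoodMHG m β) (h : β ≤ γ) : β ≤ maxGoodSub m γ := fun f =>
  Finset.le_sup (f := fun β : MHG n r => β f) (Finset.mem_filter.mpr ⟨Finset.mem_Iic.mpr h, hβ⟩)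

lemma exists_goodMHG_of_maxGoodSub_pos {f : Sym (Fin n) r} (h : 0 < maxGoodSub m γ f) :
    ∃ β ≤ γ, GoodMHG m β ∧ 0 < β f := by
  obtain ⟨β, hβ, hf⟩ := Finset.lt_sup_iff.mp h
  rw [Finset.mem_filter, Finset.mem_Iic] at hβ
  exact ⟨β, hβ.1, hβ.2, hf⟩

lemma ne_zero_of_pos_apply {f : Sym (Fin n) r} (h : 0 < β f) : β ≠ 0 :=
  fun h0 => h.ne' (congrFun h0 f)

lemma mhConnected_barGraph_maxGoodSub (hm : 0 < m) (γ : MHG n r) :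
    MHConnected (barGraph m (maxGoodSub m γ)) := by
  set σ := maxGoodSub m γ
  have reach_zero : ∀ u : Fin n, (∃ E ∈ barGraph m σ, u ∈ E) →
      Relation.ReflTransGen (EdgeAdj (barGraph m σ)) u ⟨0, u.pos⟩ := by
    rintro u ⟨E, hE, huE⟩
    have hz : (⟨0, u.pos⟩ : Fin n) ∈ barEdge n m := mem_barEdge.mpr hm
    rcases mem_barGraph.mp hE with rfl | ⟨f, hf, rfl⟩
    · exact .single ⟨_, hE, huE, hz⟩
    obtain ⟨β, hβγ, hβ, hβf⟩ := exists_goodMHG_of_maxGoodSub_pos hf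
    have hβσ := barGraph_mono m (le_maxGoodSub hβ hβγ)
    refine Relation.ReflTransGen.mono (fun _ _ => EdgeAdj.mono hβσ) _ _ ?_
    exact mhConnected_iff.mp (hβ.mhConnected (ne_zero_of_pos_apply hβf)) _ _
      ⟨f, mem_barGraph.mpr (.inr ⟨f, hβf, rfl⟩), huE⟩ ⟨_, Multiset.mem_cons_self _ _, hz⟩
  exact mhConnected_iff.mpr fun u v hu hv =>
    (reach_zero u hu).trans (Std.Symm.symm _ _ (reach_zero v hv))

lemma two_le_degM_barGraph_maxGoodSub (hne : maxGoodSub m γ ≠ 0) {i : Fin n}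
    (hi : 0 < degM (barGraph m (maxGoodSub m γ)) i) :
    2 ≤ degM (barGraph m (maxGoodSub m γ)) i := by
  rw [degM_barGraph] at hi ⊢
  split_ifs at hi ⊢ with him
  · obtain ⟨f, hf⟩ := Function.ne_iff.mp hne
    obtain ⟨β, hβγ, hβ, hβf⟩ := exists_goodMHG_of_maxGoodSub_pos (Nat.pos_of_ne_zero hf)
    have := hβ.degM_edgesOf_pos_of_lt (ne_zero_of_pos_apply hβf) him
    have := degM_edgesOf_mono (le_maxGoodSub hβ hβγ) i
    omega
  · obtain ⟨f, hf, hif⟩ :=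
      degM_edgesOf_pos_iff.mp (by omega : 0 < degM (edgesOf (maxGoodSub m γ)) i)
    obtain ⟨β, hβγ, hβ, hβf⟩ := exists_goodMHG_of_maxGoodSub_pos hf
    have := hβ.two_le_degM_edgesOf him (degM_edgesOf_pos_iff.mpr ⟨f, hβf, hif⟩)
    have := degM_edgesOf_mono (le_maxGoodSub hβ hβγ) i
    omega

lemma goodMHG_maxGoodSub (hm : 0 < m) (γ : MHG n r) : GoodMHG m (maxGoodSub m γ) :=
  or_iff_not_imp_left.mpr fun hσ =>
    ⟨mhConnected_barGraph_maxGoodSub hm γ, fun _ => two_le_degM_barGraph_maxGoodSub hσ⟩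

end MaxGoodSub

section Peeling

variable {n r m : ℕ} {α σ : MHG n r}

def vertexFinset (α : MHG n r) : Finset (Fin n) :=
  Finset.univ.filter fun i => 0 < degM (edgesOf α) i

lemma vertexCount_eq_card (α : MHG n r) : vertexCount α = (vertexFinset α).card := rfl

lemma vertexFinset_mono (h : α ≤ σ) : vertexFinset α ⊆ vertexFinset σ := fun i hi => by
  simp only [vertexFinset, Finset.mem_filter, Finset.mem_univ, true_and] at hi ⊢
  exact hi.trans_le (degM_edgesOf_mono h i)

lemma GoodMHG.exists_removed_edge_degM_pos (hr : 0 < r) (hα : GoodMHG m α) (hσ : GoodMHG m σ)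
    (hσne : σ ≠ 0) (hlt : σ < α) :
    ∃ f w, σ f < α f ∧ w ∈ (f : Multiset (Fin n)) ∧ 0 < degM (edgesOf σ) w := by
  by_contra! h
  obtain ⟨-, e, he⟩ := Pi.lt_def.mp hlt
  obtain ⟨w₀, hw₀⟩ := Multiset.card_pos_iff_exists_mem.mp (e.card_coe ▸ hr)
  obtain ⟨f₀, hf₀⟩ := Function.ne_iff.mp hσne
  obtain ⟨v₀, hv₀⟩ := Multiset.card_pos_iff_exists_mem.mp (f₀.card_coe ▸ hr)
  have hf₀ : 0 < σ f₀ := Nat.pos_of_ne_zero hf₀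
  -- An edge of ᾱ through a σ-isolated vertex is neither the bar edge nor an edge of σ,
  -- so it is a removed edge, and all its vertices are σ-isolated too.
  have hiso : ∀ v, Relation.ReflTransGen (EdgeAdj (barGraph m α)) w₀ v →
      degM (edgesOf σ) v = 0 := by
    intro v hv
    induction hv with
    | refl => exact Nat.le_zero.mp (h e w₀ he hw₀)
    | @tail b v _ hbv ih =>
      obtain ⟨E, hE, hbE, hvE⟩ := hbv
      rcases mem_barGraph.mp hE with rfl | ⟨g, hg, rfl⟩
      · exact absurd ih (hσ.degM_edgesOf_pos_of_lt hσne (mem_barEdge.mp hbE)).ne'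
      rcases Nat.eq_zero_or_pos (σ g) with hσg | hσg
      · exact Nat.le_zero.mp (h g v (hσg ▸ hg) hvE)
      · exact absurd ih (degM_edgesOf_pos_iff.mpr ⟨g, hσg, hbE⟩).ne'
  have hα₀ : α ≠ 0 := ne_zero_of_pos_apply ((Nat.zero_le _).trans_lt he)
  have hpath := mhConnected_iff.mp (hα.mhConnected hα₀) w₀ v₀
    ⟨e, mem_barGraph.mpr (.inr ⟨e, (Nat.zero_le _).trans_lt he, rfl⟩), hw₀⟩
    ⟨f₀, mem_barGraph.mpr (.inr ⟨f₀, hf₀.trans_le (hlt.le f₀), rfl⟩), hv₀⟩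
  exact (degM_edgesOf_pos_iff.mpr ⟨f₀, hf₀, hv₀⟩).ne' (hiso v₀ hpath)

theorem GoodMHG.excess_lt (hr : 0 < r) (hα : GoodMHG m α) (hσ : GoodMHG m σ) (hσne : σ ≠ 0)
    (hlt : σ < α) :
    (r * edgeCount σ : ℤ) - 2 * vertexCount σ < r * edgeCount α - 2 * vertexCount α := by
  obtain ⟨f, w, hf, hwf, hw⟩ := hα.exists_removed_edge_degM_pos hr hσ hσne hlt
  have hV : vertexFinset σ ⊆ vertexFinset α := vertexFinset_mono hlt.le
  set T := vertexFinset α \ vertexFinset σ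
  have hbound : ∀ i, degM (edgesOf σ) i + (if i ∈ T then 2 else 0) + (if i = w then 1 else 0)
      ≤ degM (edgesOf α) i := by
    intro i
    by_cases hiT : i ∈ T
    · have ⟨hαi, hσi⟩ : 0 < degM (edgesOf α) i ∧ ¬ 0 < degM (edgesOf σ) i := by
        simpa [T, vertexFinset] using hiT
      have him : ¬ (i : ℕ) < m := fun him => hσi (hσ.degM_edgesOf_pos_of_lt hσne him)
      have hiw : i ≠ w := by rintro rfl; exact hσi hw
      have := hα.two_le_degM_edgesOf him hαi
      simp only [hiT, hiw, if_true, if_false]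
      omega
    by_cases hiw : i = w
    · subst hiw
      simpa [hiT] using degM_edgesOf_lt_of_lt hlt.le hf hwf
    · simpa [hiT, hiw] using degM_edgesOf_mono hlt.le i
  have hsum : r * edgeCount σ + 2 * T.card + 1 ≤ r * edgeCount α := by
    calc r * edgeCount σ + 2 * T.card + 1
        = ∑ i, (degM (edgesOf σ) i + (if i ∈ T then 2 else 0) + (if i = w then 1 else 0)) := by
          rw [Finset.sum_add_distrib, Finset.sum_add_distrib, sum_degM_edgesOf,
            Finset.sum_ite_mem, Finset.sum_ite_eq']
          simp [mul_comm]
      _ ≤ ∑ i, degM (edgesOf α) i := Finset.sum_le_sum fun i _ => hbound i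
      _ = r * edgeCount α := sum_degM_edgesOf α
  have hT : T.card = (vertexFinset α).card - (vertexFinset σ).card :=
    Finset.card_sdiff_of_subset hV
  have := Finset.card_le_card hV
  rw [vertexCount_eq_card, vertexCount_eq_card]
  omega

end Peeling

theorem peeling_lemma_general (n r m : ℕ) (hr : 2 ≤ r) (hm : 2 ≤ m)
    (α : MHG n r) (hgood : GoodMHG m α)
    (e : Sym (Fin n) r) (he : 0 < α e)
    (hstar : maxGoodSub m (Function.update α e (α e - 1)) ≠ 0) :
    (r * edgeCount (maxGoodSub m (Function.update α e (α e - 1))) : ℤ) -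
        2 * (vertexCount (maxGoodSub m (Function.update α e (α e - 1))) : ℤ) + m ≤
      (r * edgeCount α : ℤ) - 2 * (vertexCount α : ℤ) + m - 1 := by
  have hlt : maxGoodSub m (Function.update α e (α e - 1)) < α :=
    (maxGoodSub_le _).trans_lt (update_lt_self_iff.mpr (Nat.sub_lt he one_pos))
  have := hgood.excess_lt (by omega) (goodMHG_maxGoodSub (by omega) _) hstar hlt
  omega

/-- Lemma 6.4 (peeling lemma for good multi-hypergraphs): if α is a nonzero good
multi-hypergraph, e is an edge of α, and α⋆(e), the maximal good subgraph of
α − 1_e, is nonzero, then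
r|α⋆(e)| − 2|V(α⋆(e))| + m ≤ r|α| − 2|V(α)| + m − 1. -/
theorem peeling_lemma (n r m : ℕ) (hr : 2 ≤ r) (hm : 2 ≤ m) (hmn : m ≤ n)
    (α : MHG n r) (hgood : GoodMHG m α) (hne : α ≠ 0)
    (e : Sym (Fin n) r) (he : 0 < α e)
    (hstar : maxGoodSub m (Function.update α e (α e - 1)) ≠ 0) :
    (r * edgeCount (maxGoodSub m (Function.update α e (α e - 1))) : ℤ) -
        2 * (vertexCount (maxGoodSub m (Function.update α e (α e - 1))) : ℤ) + m ≤
      (r * edgeCount α : ℤ) - 2 * (vertexCount α : ℤ) + m - 1 :=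
  peeling_lemma_general n r m hr hm α hgood e he hstar
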